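/- arXiv:math/0703616 — 2 statements merged into one kernel-verified Lean document; each statement's English description precedes it below -/
import Mathlib

section
/- The space of ordered triples of affinely independent points in ℝ² (i.e., non-degenerate labeled triangles) has exactly two path components, distinguished by the sign of the orientation determinant det(a₂−a₁, a₃−a₁): two non-degenerate labeled triangles can be joined by a path of non-degenerate labeled triangles if and only if their orientation determinants have the same sign. -/
open Complex unitInterval

/-- The orientation determinant `det (a₂ − a₁, a₃ − a₁)` of a labeled triangle. -/
def triangleOrientation (a : Fin 3 → ℝ × ℝ) : ℝ :=
  (a 1 - a 0).1 * (a 2 - a 0).2 - (a 1 - a 0).2 * (a 2 - a 0).1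

noncomputable def cdet (u v : ℂ) : ℝ := u.re * v.im - u.im * v.re

lemma cdet_mul (u w : ℂ) : cdet u (u * w) = Complex.normSq u * w.im := by
  simp [cdet, Complex.mul_re, Complex.mul_im, Complex.normSq_apply]; ring

lemma isPathConnected_prod {X Y : Type*} [TopologicalSpace X] [TopologicalSpace Y]
    {A : Set X} {B : Set Y} (hA : IsPathConnected A) (hB : IsPathConnected B) :
    IsPathConnected (A ×ˢ B) := by
  obtain ⟨x, hx, hx'⟩ := hA
  obtain ⟨y, hy, hy'⟩ := hB
  refine ⟨(x, y), ⟨hx, hy⟩, ?_⟩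
  rintro ⟨p, q⟩ ⟨hp, hq⟩
  obtain ⟨γ₁, hγ₁⟩ := hx' hp
  obtain ⟨γ₂, hγ₂⟩ := hy' hq
  exact ⟨γ₁.prod γ₂, fun t => ⟨hγ₁ t, hγ₂ t⟩⟩

lemma pos_pathConnected : IsPathConnected {p : ℂ × ℂ | 0 < cdet p.1 p.2} := by
  have hA : IsPathConnected {z : ℂ | z ≠ 0} := by
    have h := isPathConnected_compl_singleton_of_one_lt_rank
      (E := ℂ) (by rw [Complex.rank_real_complex]; norm_num) 0
    have hs : {z : ℂ | z ≠ 0} = ({0}ᶜ : Set ℂ) := by ext z; simp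
    rw [hs]; exact h
  have hB : IsPathConnected {z : ℂ | 0 < z.im} :=
    (convex_halfSpace_im_gt (0:ℝ)).isPathConnected ⟨Complex.I, by simp⟩
  have hf : Continuous (fun p : ℂ × ℂ => (p.1, p.1 * p.2)) := by continuity
  have himg := (isPathConnected_prod hA hB).image hf
  convert himg using 1
  ext ⟨u, v⟩
  constructor
  · intro hv
    have hu : u ≠ 0 := by
      rintro rfl; simp [cdet] at hv
    refine ⟨(u, v / u), ⟨hu, ?_⟩, by simp [mul_div_cancel₀ v hu]⟩
    have h1 : cdet u (u * (v / u)) = Complex.normSq u * (v / u).im := cdet_mul u (v / u)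
    rw [mul_div_cancel₀ v hu] at h1
    have h2 : 0 < Complex.normSq u * (v / u).im := h1 ▸ hv
    have hn : 0 < Complex.normSq u := Complex.normSq_pos.mpr hu
    show 0 < (v / u).im
    nlinarith
  · rintro ⟨⟨u', w⟩, ⟨hu', hw⟩, heq⟩
    rw [Prod.mk.injEq] at heq
    obtain ⟨rfl, rfl⟩ := heq
    show 0 < cdet u' (u' * w)
    rw [cdet_mul]
    have hn : 0 < Complex.normSq u' := Complex.normSq_pos.mpr hu'
    exact mul_pos hn hw

lemma neg_pathConnected : IsPathConnected {p : ℂ × ℂ | cdet p.1 p.2 < 0} := by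
  have hf : Continuous (fun p : ℂ × ℂ =>
      ((starRingEnd ℂ) p.1, (starRingEnd ℂ) p.2)) := by continuity
  have himg := pos_pathConnected.image hf
  convert himg using 1
  ext ⟨u, v⟩
  have key : ∀ z w : ℂ, cdet ((starRingEnd ℂ) z) ((starRingEnd ℂ) w) = - cdet z w := by
    intro z w; simp [cdet]; ring
  constructor
  · intro hv
    exact ⟨((starRingEnd ℂ) u, (starRingEnd ℂ) v), by simpa [key] using hv, by simp⟩
  · rintro ⟨⟨u', w⟩, hmem, heq⟩
    rw [Prod.mk.injEq] at heq
    obtain ⟨rfl, rfl⟩ := heq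
    show cdet ((starRingEnd ℂ) u') ((starRingEnd ℂ) w) < 0
    rw [key]
    simpa using hmem

noncomputable def myC (p : ℝ × ℝ) : ℂ := ⟨p.1, p.2⟩

def invC (z : ℂ) : ℝ × ℝ := (z.re, z.im)

lemma myC_eq (p : ℝ × ℝ) : myC p = (p.1 : ℂ) + p.2 * Complex.I := by
  apply Complex.ext <;> simp [myC]

lemma continuous_myC : Continuous myC := by
  have : myC = fun p : ℝ × ℝ => (p.1 : ℂ) + p.2 * Complex.I := funext myC_eq
  rw [this]; continuity

lemma continuous_invC : Continuous invC :=
  (Complex.continuous_re.prodMk Complex.continuous_im)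

lemma invC_myC (p : ℝ × ℝ) : invC (myC p) = p := rfl

lemma myC_invC (z : ℂ) : myC (invC z) = z := rfl

noncomputable def Phi (a : Fin 3 → ℝ × ℝ) : ℂ × ℂ :=
  (myC (a 1 - a 0), myC (a 2 - a 0))

lemma orient_eq (a : Fin 3 → ℝ × ℝ) :
    triangleOrientation a = cdet (Phi a).1 (Phi a).2 := rfl

lemma continuous_orient : Continuous triangleOrientation := by
  unfold triangleOrientation
  fun_prop

lemma lift_joined (a b : Fin 3 → ℝ × ℝ) {T : Set (ℂ × ℂ)}
    (hT : ∀ p ∈ T, cdet p.1 p.2 ≠ 0)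
    (h : JoinedIn T (Phi a) (Phi b)) :
    JoinedIn {x : Fin 3 → ℝ × ℝ | triangleOrientation x ≠ 0} a b := by
  obtain ⟨γ, hγ⟩ := h
  set L : unitInterval → ℝ × ℝ := fun t => (1 - (t : ℝ)) • a 0 + (t : ℝ) • b 0 with hL
  set δ : unitInterval → Fin 3 → ℝ × ℝ :=
    fun t => ![L t, L t + invC (γ t).1, L t + invC (γ t).2] with hδ
  have hcontL : Continuous L := by
    apply Continuous.add
    · exact (continuous_const.sub continuous_subtype_val).smul continuous_const
    · exact continuous_subtype_val.smul continuous_const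
  have hcontδ : Continuous δ := by
    apply continuous_pi
    intro i
    fin_cases i
    · simpa [hδ] using hcontL
    · exact (hcontL.add (continuous_invC.comp (continuous_fst.comp γ.continuous))).congr fun t => by simp [hδ]
    · exact (hcontL.add (continuous_invC.comp (continuous_snd.comp γ.continuous))).congr fun t => by simp [hδ]
  have hδ1 : ∀ t, δ t 1 - δ t 0 = invC (γ t).1 := by
    intro t; simp [hδ]
  have hδ2 : ∀ t, δ t 2 - δ t 0 = invC (γ t).2 := by
    intro t; simp [hδ]
  have horient : ∀ t, triangleOrientation (δ t) = cdet (γ t).1 (γ t).2 := by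
    intro t
    rw [orient_eq]
    show cdet (myC (δ t 1 - δ t 0)) (myC (δ t 2 - δ t 0)) = _
    rw [hδ1, hδ2, myC_invC, myC_invC]
  have hsrc : δ 0 = a := by
    funext i
    fin_cases i
    · simp [hδ, hL]
    · have : (γ 0).1 = (Phi a).1 := by rw [γ.source]
      simp [hδ, hL, this]
      simp only [Phi, invC_myC]; abel
    · have : (γ 0).2 = (Phi a).2 := by rw [γ.source]
      simp [hδ, hL, this]
      simp only [Phi, invC_myC]; abel
  have htgt : δ 1 = b := by
    funext i
    fin_cases i
    · simp [hδ, hL]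
    · have : (γ 1).1 = (Phi b).1 := by rw [γ.target]
      simp [hδ, hL, this]
      simp only [Phi, invC_myC]; abel
    · have : (γ 1).2 = (Phi b).2 := by rw [γ.target]
      simp [hδ, hL, this]
      simp only [Phi, invC_myC]; abel
  refine ⟨⟨⟨δ, hcontδ⟩, hsrc, htgt⟩, ?_⟩
  intro t
  show triangleOrientation (δ t) ≠ 0
  rw [horient]
  exact hT _ (hγ t)

/-- The space of non-degenerate labeled triangles in `ℝ²` has exactly two path
components, distinguished by the sign of the orientation determinant: two labeled
triangles with nonzero orientation determinant can be joined by a path of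
non-degenerate labeled triangles if and only if their orientation determinants have
the same sign. -/
theorem nondegenerate_triangles_path_components
    (a b : Fin 3 → ℝ × ℝ)
    (ha : triangleOrientation a ≠ 0) (hb : triangleOrientation b ≠ 0) :
    JoinedIn {x : Fin 3 → ℝ × ℝ | triangleOrientation x ≠ 0} a b ↔
      0 < triangleOrientation a * triangleOrientation b := by
  constructor
  · rintro ⟨γ, hγ⟩
    by_contra hmul
    push_neg at hmul
    have hne : triangleOrientation a * triangleOrientation b ≠ 0 := mul_ne_zero ha hb
    have hlt : triangleOrientation a * triangleOrientation b < 0 := lt_of_le_of_ne hmul hne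
    set g : unitInterval → ℝ := fun t => triangleOrientation (γ t) with hg
    have hcg : Continuous g := continuous_orient.comp γ.continuous
    have hg0 : g 0 = triangleOrientation a := by simp [hg]
    have hg1 : g 1 = triangleOrientation b := by simp [hg]
    have hzero : (0 : ℝ) ∈ Set.range g := by
      rcases mul_neg_iff.mp hlt with ⟨h1, h2⟩ | ⟨h1, h2⟩
      · exact intermediate_value_univ 1 0 hcg ⟨by rw [hg1]; exact h2.le, by rw [hg0]; exact h1.le⟩
      · exact intermediate_value_univ 0 1 hcg ⟨by rw [hg0]; exact h1.le, by rw [hg1]; exact h2.le⟩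
    obtain ⟨t, ht⟩ := hzero
    exact (hγ t) (by simpa [hg] using ht)
  · intro hmul
    rcases mul_pos_iff.mp hmul with ⟨h1, h2⟩ | ⟨h1, h2⟩
    · refine lift_joined a b (T := {p : ℂ × ℂ | 0 < cdet p.1 p.2})
        (fun p hp => ne_of_gt hp) ?_
      exact pos_pathConnected.joinedIn _ (show _ ∈ _ from by rw [Set.mem_setOf_eq, ← orient_eq]; exact h1)
        _ (show _ ∈ _ from by rw [Set.mem_setOf_eq, ← orient_eq]; exact h2)
    · refine lift_joined a b (T := {p : ℂ × ℂ | cdet p.1 p.2 < 0})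
        (fun p hp => ne_of_lt hp) ?_
      exact neg_pathConnected.joinedIn _ (show _ ∈ _ from by rw [Set.mem_setOf_eq, ← orient_eq]; exact h1)
        _ (show _ ∈ _ from by rw [Set.mem_setOf_eq, ← orient_eq]; exact h2)
end

section
/- Let f : Ω₀ → Ω₁ be a bijective bi-Lipschitz map between open subsets of ℝⁿ with constants C, C⁻¹ as above. Then the pullback H(u) = u ∘ f maps H¹(Ω₁) boundedly into H¹(Ω₀), with ‖u ∘ f‖_{H¹(Ω₀)} ≤ K·‖u‖_{H¹(Ω₁)} for a constant K depending only on C and n. -/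
/-!
The inverse of `f` is `C⁻¹`-Lipschitz on `Ω₁`, and Lipschitz maps increase Hausdorff (hence
Lebesgue) measure by at most the `n`-th power of their constant. So the push-forward of Lebesgue
measure on `Ω₀` under `f` is at most `C⁻ⁿ` times Lebesgue measure on `Ω₁`: this gives the change
of variables inequality `∫ h ∘ f ≤ C⁻ⁿ ∫ h`, and shows that `f` pulls null sets back to null sets.
By Rademacher's theorem `u` and `f` are differentiable almost everywhere, so the chain rule holds
almost everywhere on `Ω₀` and bounds `‖D(u ∘ f)‖` by `C⁻¹ ‖Du ∘ f‖`.
-/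

open MeasureTheory Set Module Function
open scoped ENNReal NNReal Topology

theorem injOn_of_dist_le_mul_dist {α β : Type*} [MetricSpace α] [PseudoMetricSpace β]
    {f : α → β} {s : Set α} {K : ℝ≥0}
    (hf : ∀ x ∈ s, ∀ y ∈ s, dist x y ≤ K * dist (f x) (f y)) : InjOn f s := fun x hx y hy hxy =>
  dist_le_zero.1 <| by simpa [hxy] using hf x hx y hy

theorem lipschitzOnWith_invFunOn_image {α β : Type*} [PseudoMetricSpace α] [PseudoMetricSpace β]
    [Nonempty α] {f : α → β} {s : Set α} {K : ℝ≥0}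
    (hf : ∀ x ∈ s, ∀ y ∈ s, dist x y ≤ K * dist (f x) (f y)) :
    LipschitzOnWith K (invFunOn f s) (f '' s) := by
  refine LipschitzOnWith.of_dist_le_mul fun a ha b hb => ?_
  have := hf _ (invFunOn_mem ha) _ (invFunOn_mem hb)
  rwa [invFunOn_eq ha, invFunOn_eq hb] at this

theorem lintegral_comp_le_of_map_le {α β : Type*} [MeasurableSpace α] [MeasurableSpace β]
    {μ : Measure α} {ν : Measure β} {f : α → β} {c : ℝ≥0∞} (hf : AEMeasurable f μ)
    (hmap : μ.map f ≤ c • ν) {h : β → ℝ≥0∞} (hh : AEMeasurable h ν) :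
    ∫⁻ x, h (f x) ∂μ ≤ c * ∫⁻ y, h y ∂ν :=
  calc ∫⁻ x, h (f x) ∂μ = ∫⁻ y, h y ∂μ.map f :=
        (lintegral_map' ((hh.smul_measure c).mono_measure hmap) hf).symm
    _ ≤ ∫⁻ y, h y ∂(c • ν) := lintegral_mono' hmap le_rfl
    _ = c * ∫⁻ y, h y ∂ν := by rw [lintegral_smul_measure, smul_eq_mul]

theorem ae_comp_of_map_le_smul {α β : Type*} [MeasurableSpace α] [MeasurableSpace β]
    {μ : Measure α} {ν : Measure β} {f : α → β} {c : ℝ≥0∞} (hf : AEMeasurable f μ)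
    (hmap : μ.map f ≤ c • ν) {p : β → Prop} (hp : ∀ᵐ y ∂ν, p y) : ∀ᵐ x ∂μ, p (f x) :=
  ae_of_ae_map hf (Measure.absolutelyContinuous_of_le_smul hmap |>.ae_le hp)

theorem nnnorm_fderiv_comp_le_of_lipschitzOn {𝕜 E F G : Type*} [NontriviallyNormedField 𝕜]
    [NormedAddCommGroup E] [NormedSpace 𝕜 E] [NormedAddCommGroup F] [NormedSpace 𝕜 F]
    [NormedAddCommGroup G] [NormedSpace 𝕜 G] {f : E → F} {u : F → G} {x : E} {s : Set E}
    {K : ℝ≥0} (hs : s ∈ 𝓝 x) (hf : LipschitzOnWith K f s) (hdf : DifferentiableAt 𝕜 f x)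
    (hdu : DifferentiableAt 𝕜 u (f x)) :
    ‖fderiv 𝕜 (u ∘ f) x‖₊ ≤ ‖fderiv 𝕜 u (f x)‖₊ * K := by
  rw [fderiv_comp x hdu hdf]
  exact (ContinuousLinearMap.opNNNorm_comp_le _ _).trans
    (mul_le_mul_right (mod_cast norm_fderiv_le_of_lipschitzOn 𝕜 hs hf) _)

section AddHaar

variable {E : Type*} [NormedAddCommGroup E] [NormedSpace ℝ E] [FiniteDimensional ℝ E]
  [MeasurableSpace E] [BorelSpace E] (μ : Measure E) [μ.IsAddHaarMeasure]

theorem LipschitzOnWith.addHaar_image_le {g : E → E} {s : Set E} {K : ℝ≥0}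
    (hg : LipschitzOnWith K g s) :
    μ (g '' s) ≤ (K : ℝ≥0∞) ^ finrank ℝ E * μ s := by
  -- `μH[finrank ℝ E]` is itself an additive Haar measure, hence a constant multiple of `μ`.
  set c := (μH[finrank ℝ E] : Measure E).addHaarScalarFactor μ
  have hc : (c : ℝ≥0∞) ≠ 0 := by
    exact_mod_cast (Measure.addHaarScalarFactor_pos_of_isAddHaarMeasure _ μ).ne'
  have hμH : ∀ A, (μH[finrank ℝ E] : Measure E) A = c * μ A := fun A => by
    rw [Measure.isAddLeftInvariant_eq_smul μH[finrank ℝ E] μ]; rfl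
  have := hg.hausdorffMeasure_image_le (d := finrank ℝ E) (Nat.cast_nonneg _)
  rw [ENNReal.rpow_natCast, hμH, hμH, mul_left_comm] at this
  exact (ENNReal.mul_le_mul_iff_right hc ENNReal.coe_ne_top).1 this

theorem map_restrict_le_smul_restrict_image {f : E → E} {s : Set E} (hs : MeasurableSet s)
    (hf : AEMeasurable f (μ.restrict s)) {K : ℝ≥0}
    (hK : ∀ x ∈ s, ∀ y ∈ s, dist x y ≤ K * dist (f x) (f y)) :
    (μ.restrict s).map f ≤ ((K : ℝ≥0∞) ^ finrank ℝ E) • μ.restrict (f '' s) := by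
  refine Measure.le_iff.2 fun A hA => ?_
  rw [Measure.map_apply_of_aemeasurable hf hA, Measure.restrict_apply' hs, Measure.smul_apply,
    Measure.restrict_apply hA, smul_eq_mul]
  have hsub : f ⁻¹' A ∩ s ⊆ invFunOn f s '' (A ∩ f '' s) := fun x hx =>
    ⟨f x, ⟨hx.1, mem_image_of_mem f hx.2⟩,
      (injOn_of_dist_le_mul_dist hK).leftInvOn_invFunOn hx.2⟩
  calc μ (f ⁻¹' A ∩ s) ≤ μ (invFunOn f s '' (A ∩ f '' s)) := measure_mono hsub
    _ ≤ (K : ℝ≥0∞) ^ finrank ℝ E * μ (A ∩ f '' s) :=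
      ((lipschitzOnWith_invFunOn_image hK).mono inter_subset_right).addHaar_image_le μ

theorem LipschitzOnWith.ae_differentiableAt_of_isOpen {F : Type*} [NormedAddCommGroup F]
    [NormedSpace ℝ F] [FiniteDimensional ℝ F] {f : E → F} {s : Set E} {K : ℝ≥0}
    (hf : LipschitzOnWith K f s) (hs : IsOpen s) :
    ∀ᵐ x ∂μ.restrict s, DifferentiableAt ℝ f x := by
  filter_upwards [hf.ae_differentiableWithinAt (μ := μ) hs.measurableSet,
    ae_restrict_mem hs.measurableSet] with x hx hxs
  exact hx.differentiableAt (hs.mem_nhds hxs)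

theorem lintegral_sq_add_sq_fderiv_comp_le {F : Type*} [NormedAddCommGroup F]
    [NormedSpace ℝ F] [FiniteDimensional ℝ F] [MeasurableSpace F] [BorelSpace F]
    {f : E → E} {s : Set E} (hs : IsOpen s) (hfs : IsOpen (f '' s)) {K : ℝ≥0} (hK : 1 ≤ K)
    (hf : LipschitzOnWith K f s) (hf' : ∀ x ∈ s, ∀ y ∈ s, dist x y ≤ K * dist (f x) (f y))
    {u : E → F} {L : ℝ≥0} (hu : LipschitzOnWith L u (f '' s)) :
    ∫⁻ x in s, ((‖u (f x)‖₊ : ℝ≥0∞) ^ 2 + (‖fderiv ℝ (u ∘ f) x‖₊ : ℝ≥0∞) ^ 2) ∂μ ≤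
      (K : ℝ≥0∞) ^ (finrank ℝ E + 2) *
        ∫⁻ y in f '' s, ((‖u y‖₊ : ℝ≥0∞) ^ 2 + (‖fderiv ℝ u y‖₊ : ℝ≥0∞) ^ 2) ∂μ := by
  set h : E → ℝ≥0∞ := fun y => (‖u y‖₊ : ℝ≥0∞) ^ 2 + (‖fderiv ℝ u y‖₊ : ℝ≥0∞) ^ 2
  have hfm : AEMeasurable f (μ.restrict s) := hf.continuousOn.aemeasurable hs.measurableSet
  have hmap := map_restrict_le_smul_restrict_image μ hs.measurableSet hfm hf'
  have hhm : AEMeasurable h (μ.restrict (f '' s)) :=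
    ((hu.continuousOn.aemeasurable hfs.measurableSet).enorm.pow_const 2).add
      ((measurable_fderiv ℝ u).enorm.pow_const 2).aemeasurable
  have hdu : ∀ᵐ x ∂μ.restrict s, DifferentiableAt ℝ u (f x) :=
    ae_comp_of_map_le_smul hfm hmap (hu.ae_differentiableAt_of_isOpen μ hfs)
  have hpointwise : ∀ᵐ x ∂μ.restrict s,
      (‖u (f x)‖₊ : ℝ≥0∞) ^ 2 + (‖fderiv ℝ (u ∘ f) x‖₊ : ℝ≥0∞) ^ 2 ≤
        (K : ℝ≥0∞) ^ 2 * h (f x) := by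
    filter_upwards [hdu, hf.ae_differentiableAt_of_isOpen μ hs, ae_restrict_mem hs.measurableSet]
      with x hdux hdfx hx
    have hchain := nnnorm_fderiv_comp_le_of_lipschitzOn (hs.mem_nhds hx) hf hdfx hdux
    have hK' : (1 : ℝ≥0∞) ≤ (K : ℝ≥0∞) ^ 2 := one_le_pow₀ (by exact_mod_cast hK)
    calc (‖u (f x)‖₊ : ℝ≥0∞) ^ 2 + (‖fderiv ℝ (u ∘ f) x‖₊ : ℝ≥0∞) ^ 2
        ≤ (K : ℝ≥0∞) ^ 2 * (‖u (f x)‖₊ : ℝ≥0∞) ^ 2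
          + ((‖fderiv ℝ u (f x)‖₊ * K : ℝ≥0) : ℝ≥0∞) ^ 2 :=
          add_le_add (le_mul_of_one_le_left zero_le hK') (pow_le_pow_left' (mod_cast hchain) 2)
      _ = (K : ℝ≥0∞) ^ 2 * h (f x) := by push_cast; ring
  calc ∫⁻ x in s, ((‖u (f x)‖₊ : ℝ≥0∞) ^ 2 + (‖fderiv ℝ (u ∘ f) x‖₊ : ℝ≥0∞) ^ 2) ∂μ
      ≤ ∫⁻ x in s, (K : ℝ≥0∞) ^ 2 * h (f x) ∂μ := lintegral_mono_ae hpointwise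
    _ = (K : ℝ≥0∞) ^ 2 * ∫⁻ x in s, h (f x) ∂μ := lintegral_const_mul' _ _ (by simp)
    _ ≤ (K : ℝ≥0∞) ^ 2 * ((K : ℝ≥0∞) ^ finrank ℝ E * ∫⁻ y in f '' s, h y ∂μ) := by
      gcongr
      exact lintegral_comp_le_of_map_le hfm hmap hhm
    _ = (K : ℝ≥0∞) ^ (finrank ℝ E + 2) * ∫⁻ y in f '' s, h y ∂μ := by ring

end AddHaar

/-- Let `f : Ω₀ → Ω₁` be a bijective bi-Lipschitz map (constants `C, C⁻¹`) between
open subsets of `ℝⁿ`.  Then the pullback `u ↦ u ∘ f` is bounded for the `H¹` norm: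
there is a constant `K` (depending only on `C` and `n`) such that for every
(Lipschitz) `u`, `‖u ∘ f‖²_{H¹(Ω₀)} ≤ K²·‖u‖²_{H¹(Ω₁)}`, the `H¹` norm squared being
the integral of `|u|² + ‖∇u‖²`. -/
theorem pullback_H1_bounded_of_biLipschitz
    (n : ℕ) (Ω₀ Ω₁ : Set (EuclideanSpace ℝ (Fin n)))
    (hΩ₀ : IsOpen Ω₀) (hΩ₁ : IsOpen Ω₁)
    (C : ℝ) (hC : 0 < C) (hC1 : C ≤ 1)
    (f : EuclideanSpace ℝ (Fin n) → EuclideanSpace ℝ (Fin n))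
    (hbij : Set.BijOn f Ω₀ Ω₁)
    (hbl : ∀ x ∈ Ω₀, ∀ y ∈ Ω₀,
      C * ‖x - y‖ ≤ ‖f x - f y‖ ∧ ‖f x - f y‖ ≤ C⁻¹ * ‖x - y‖) :
    ∃ K : NNReal, ∀ (u : EuclideanSpace ℝ (Fin n) → ℝ) (Lu : NNReal),
      LipschitzOnWith Lu u Ω₁ →
      ∫⁻ x in Ω₀, ((‖u (f x)‖₊ : ENNReal) ^ 2
          + (‖fderiv ℝ (u ∘ f) x‖₊ : ENNReal) ^ 2) ∂volume ≤
        (K : ENNReal) ^ 2 *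
          ∫⁻ y in Ω₁, ((‖u y‖₊ : ENNReal) ^ 2
            + (‖fderiv ℝ u y‖₊ : ENNReal) ^ 2) ∂volume := by
  set C' : ℝ≥0 := ⟨C⁻¹, (inv_pos.2 hC).le⟩
  have hC'coe : (C' : ℝ) = C⁻¹ := rfl
  have hC' : 1 ≤ C' := by
    rw [← NNReal.coe_le_coe, hC'coe]; exact one_le_inv₀ hC |>.2 hC1
  have hf : LipschitzOnWith C' f Ω₀ := LipschitzOnWith.of_dist_le_mul fun x hx y hy => by
    simpa only [dist_eq_norm, hC'coe] using (hbl x hx y hy).2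
  have hf' : ∀ x ∈ Ω₀, ∀ y ∈ Ω₀, dist x y ≤ C' * dist (f x) (f y) := fun x hx y hy => by
    rw [dist_eq_norm, dist_eq_norm, hC'coe, inv_mul_eq_div, le_div_iff₀' hC]
    exact (hbl x hx y hy).1
  refine ⟨NNReal.sqrt (C' ^ (n + 2)), fun u Lu hu => ?_⟩
  rw [← hbij.image_eq] at hΩ₁ hu ⊢
  have := lintegral_sq_add_sq_fderiv_comp_le volume hΩ₀ hΩ₁ hC' hf hf' hu
  rw [finrank_euclideanSpace_fin] at this
  rwa [← ENNReal.coe_pow, NNReal.sq_sqrt, ENNReal.coe_pow]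
end
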